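/- Let n ≥ 2 and let A, B ∈ GL_n(ℂ) with AB⁻¹ a pseudo-reflection and spec(A) ∩ spec(B) = ∅. Then the pair (A, B) is linearly rigid: for any A', B' ∈ GL_n(ℂ) with A' conjugate to A, B' conjugate to B, and A'·(B')⁻¹ a pseudo-reflection, there exists U ∈ GL_n(ℂ) with A' = U A U⁻¹ and B' = U B U⁻¹. -/

import Mathlib

/-! Write `A - B = v wᵀ`. Counting dimensions gives `x ≠ 0` with `w ⬝ᵥ Aʲ x = 0` for `j < n - 1`,
and then `Aʲ x = Bʲ x` for `j < n`. These vectors are linearly independent: otherwise a nonzero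
polynomial of degree `< n` kills `x` under `A`, and splitting off a root `μ` yields an eigenvector
`y = r(A) x` of `A` with `w ⬝ᵥ y = 0`, hence also an eigenvector of `B` for `μ`. In this common
basis `A` and `B` are the companion matrices of their characteristic polynomials, so two such pairs
with the same characteristic polynomials are simultaneously conjugate. -/

open Polynomial

namespace Matrix

section Field

variable {K m n : Type*} [Field K] [Fintype n] [DecidableEq n]

theorem exists_eq_vecMulVec_of_rank_le_one {M : Matrix m n K} (h : M.rank ≤ 1) :
    ∃ v w, M = vecMulVec v w := by
  rw [rank, Submodule.finrank_le_one_iff_isPrincipal] at h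
  obtain ⟨v, hv⟩ := h
  have hcol (j : n) : ∃ c : K, c • v = M *ᵥ Pi.single j 1 :=
    Submodule.mem_span_singleton.mp (hv ▸ ⟨Pi.single j 1, rfl⟩)
  choose w hw using hcol
  refine ⟨v, w, ext fun i j => ?_⟩
  simpa [mulVec_single, vecMulVec_apply, mul_comm] using (congrFun (hw j) i).symm

theorem rank_sub_eq_rank_mul_inv_sub_one (A : Matrix n n K) {B : Matrix n n K} (hB : IsUnit B) :
    (A - B).rank = (A * B⁻¹ - 1).rank := by
  have hB' : IsUnit B.det := (isUnit_iff_isUnit_det B).mp hB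
  rw [← rank_mul_eq_left_of_isUnit_det B (A * B⁻¹ - 1) hB', Matrix.sub_mul, Matrix.one_mul,
    nonsing_inv_mul_cancel_right B A hB']

theorem mem_spectrum_of_mulVec_eq_smul {A : Matrix n n K} {x : n → K} {μ : K} (hx : x ≠ 0)
    (h : A *ᵥ x = μ • x) : μ ∈ spectrum K A := by
  rw [spectrum.mem_iff, ← mulVec_injective_iff_isUnit]
  refine fun hinj => hx (hinj ?_)
  simp [sub_mulVec, h, Algebra.algebraMap_eq_smul_one, smul_mulVec]

theorem eq_conj_of_mul_eq_mul_of_mul_eq_mul {P P' C M M' : Matrix n n K} (hP : IsUnit P)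
    (hP' : IsUnit P') (h : M * P = P * C) (h' : M' * P' = P' * C) :
    M' = P' * P⁻¹ * M * (P' * P⁻¹)⁻¹ := by
  have hd := (isUnit_iff_isUnit_det P).mp hP
  have hd' := (isUnit_iff_isUnit_det P').mp hP'
  rw [mul_inv_rev, nonsing_inv_nonsing_inv P hd, ← mul_nonsing_inv_cancel_right P' M' hd', h']
  simp only [Matrix.mul_assoc, ← Matrix.mul_assoc M, h, nonsing_inv_mul_cancel_left P _ hd]

end Field

section Companion

variable {R : Type*} [CommRing R] {n : ℕ}

def companion (p : R[X]) : Matrix (Fin n) (Fin n) R :=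
  of fun i j => if (j : ℕ) + 1 = n then -p.coeff i else if (i : ℕ) = j + 1 then 1 else 0

def krylov (M : Matrix (Fin n) (Fin n) R) (x : Fin n → R) : Matrix (Fin n) (Fin n) R :=
  of fun i j => (M ^ (j : ℕ) *ᵥ x) i

@[simp]
theorem col_krylov (M : Matrix (Fin n) (Fin n) R) (x : Fin n → R) (j : Fin n) :
    (krylov M x).col j = M ^ (j : ℕ) *ᵥ x :=
  rfl

theorem krylov_mulVec (M : Matrix (Fin n) (Fin n) R) (x y : Fin n → R) :
    krylov M x *ᵥ y = ∑ j, y j • (M ^ (j : ℕ) *ᵥ x) := by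
  ext i
  simp [krylov, mulVec, dotProduct, Finset.sum_apply, mul_comm]

theorem pow_card_mulVec [Nontrivial R] (M : Matrix (Fin n) (Fin n) R) (x : Fin n → R) :
    M ^ n *ᵥ x = -∑ j : Fin n, M.charpoly.coeff j • (M ^ (j : ℕ) *ᵥ x) := by
  have hCH := aeval_self_charpoly M
  rw [M.charpoly_monic.as_sum, charpoly_natDegree_eq_dim, Fintype.card_fin,
    ← Fin.sum_univ_eq_sum_range] at hCH
  simp only [map_add, map_sum, map_mul, aeval_C, aeval_X_pow, ← Algebra.smul_def] at hCH
  rw [eq_neg_iff_add_eq_zero]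
  simpa [add_mulVec, sum_mulVec, smul_mulVec] using congrArg (· *ᵥ x) hCH

theorem mul_krylov [Nontrivial R] (M : Matrix (Fin n) (Fin n) R) (x : Fin n → R) :
    M * krylov M x = krylov M x * companion M.charpoly := by
  ext i j
  change (M *ᵥ (M ^ (j : ℕ) *ᵥ x)) i = (krylov M x *ᵥ fun k => companion M.charpoly k j) i
  rw [mulVec_mulVec, ← pow_succ', krylov_mulVec]
  by_cases hj : (j : ℕ) + 1 = n
  · simp [companion, hj, pow_card_mulVec]
  · rw [Finset.sum_eq_single ⟨(j : ℕ) + 1, by omega⟩]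
    · simp [companion, hj]
    · intro k _ hk
      have hk' : (k : ℕ) ≠ j + 1 := fun h => hk (Fin.ext h)
      simp [companion, hj, hk']
    · simp

end Companion

section Levelt

variable {K : Type*} [Field K] {n : ℕ} {A B : Matrix (Fin n) (Fin n) K} {v w x : Fin n → K}

theorem exists_ne_zero_forall_dotProduct_pow_mulVec_eq_zero (hn : 0 < n)
    (A : Matrix (Fin n) (Fin n) K) (w : Fin n → K) :
    ∃ x ≠ 0, ∀ j, j + 1 < n → w ⬝ᵥ (A ^ j *ᵥ x) = 0 := by
  let N : Matrix (Fin (n - 1)) (Fin n) K := of fun j => w ᵥ* A ^ (j : ℕ)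
  have hker : LinearMap.ker N.mulVecLin ≠ ⊥ :=
    LinearMap.ker_ne_bot_of_finrank_lt (by simp; omega)
  obtain ⟨x, hx, hx0⟩ := (Submodule.ne_bot_iff _).mp hker
  refine ⟨x, hx0, fun j hj => ?_⟩
  rw [dotProduct_mulVec]
  exact congrFun hx ⟨j, by omega⟩

theorem mulVec_eq_sub_of_sub_eq_vecMulVec (hvw : A - B = vecMulVec v w) (y : Fin n → K) :
    B *ᵥ y = A *ᵥ y - (w ⬝ᵥ y) • v := by
  rw [← op_smul_eq_smul, ← vecMulVec_mulVec, ← hvw, sub_mulVec, sub_sub_cancel]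

theorem pow_mulVec_eq_of_sub_eq_vecMulVec (hvw : A - B = vecMulVec v w)
    (hx : ∀ j, j + 1 < n → w ⬝ᵥ (A ^ j *ᵥ x) = 0) :
    ∀ j < n, B ^ j *ᵥ x = A ^ j *ᵥ x := by
  intro j hj
  induction j with
  | zero => simp
  | succ j ih =>
    rw [pow_succ', ← mulVec_mulVec, ih (by omega), mulVec_eq_sub_of_sub_eq_vecMulVec hvw, hx j hj,
      zero_smul, sub_zero, mulVec_mulVec, ← pow_succ']

theorem krylov_eq_of_sub_eq_vecMulVec (hvw : A - B = vecMulVec v w)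
    (hx : ∀ j, j + 1 < n → w ⬝ᵥ (A ^ j *ᵥ x) = 0) : krylov B x = krylov A x := by
  ext i j
  simp [krylov, pow_mulVec_eq_of_sub_eq_vecMulVec hvw hx j j.isLt]

theorem dotProduct_aeval_mulVec_eq_zero {p : K[X]}
    (h : ∀ j ≤ p.natDegree, w ⬝ᵥ (A ^ j *ᵥ x) = 0) : w ⬝ᵥ (aeval A p *ᵥ x) = 0 := by
  rw [aeval_eq_sum_range, sum_mulVec, dotProduct_sum]
  refine Finset.sum_eq_zero fun j hj => ?_
  rw [smul_mulVec, dotProduct_smul, h j (Nat.lt_succ_iff.mp (Finset.mem_range.mp hj)),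
    smul_zero]

theorem aeval_mulVec_ne_zero_of_disjoint_spectrum [IsAlgClosed K] (hvw : A - B = vecMulVec v w)
    (hAB : Disjoint (spectrum K A) (spectrum K B)) (hx0 : x ≠ 0)
    (hx : ∀ j, j + 1 < n → w ⬝ᵥ (A ^ j *ᵥ x) = 0) {p : K[X]} (hp : p ≠ 0)
    (hpn : p.natDegree < n) : aeval A p *ᵥ x ≠ 0 := by
  induction hd : p.natDegree generalizing p with
  | zero =>
    rw [eq_C_of_natDegree_eq_zero hd] at hp ⊢
    simpa [Algebra.algebraMap_eq_smul_one, smul_mulVec, hx0] using hp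
  | succ d ih =>
    obtain ⟨μ, hμ⟩ := IsAlgClosed.exists_root p (by
      rw [degree_eq_natDegree hp, hd]; exact_mod_cast d.succ_ne_zero)
    set r := p /ₘ (X - C μ)
    have hpr : (X - C μ) * r = p := mul_divByMonic_eq_iff_isRoot.mpr hμ
    have hr0 : r ≠ 0 := by
      rintro hr
      rw [hr, mul_zero] at hpr
      exact hp hpr.symm
    have hrd : r.natDegree = d := by
      have := congrArg natDegree hpr
      rw [natDegree_mul (X_sub_C_ne_zero μ) hr0, natDegree_X_sub_C, hd] at this
      omega
    set y := aeval A r *ᵥ x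
    have hy : y ≠ 0 := ih hr0 (by omega) hrd
    intro hpx
    have hAy : A *ᵥ y = μ • y := by
      rw [← hpr, map_mul, ← mulVec_mulVec] at hpx
      simpa only [map_sub, aeval_X, aeval_C, sub_mulVec, Algebra.algebraMap_eq_smul_one,
        smul_mulVec, one_mulVec, sub_eq_zero] using hpx
    have hwy : w ⬝ᵥ y = 0 := dotProduct_aeval_mulVec_eq_zero fun j hj => hx j (by omega)
    have hBy : B *ᵥ y = μ • y := by
      rw [mulVec_eq_sub_of_sub_eq_vecMulVec hvw, hwy, zero_smul, sub_zero, hAy]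
    exact Set.disjoint_left.mp hAB (mem_spectrum_of_mulVec_eq_smul hy hAy)
      (mem_spectrum_of_mulVec_eq_smul hy hBy)

theorem isUnit_krylov_of_disjoint_spectrum [IsAlgClosed K] (hvw : A - B = vecMulVec v w)
    (hAB : Disjoint (spectrum K A) (spectrum K B)) (hx0 : x ≠ 0)
    (hx : ∀ j, j + 1 < n → w ⬝ᵥ (A ^ j *ᵥ x) = 0) : IsUnit (krylov A x) := by
  rw [← linearIndependent_cols_iff_isUnit, Fintype.linearIndependent_iff]
  intro g hg i
  by_contra hgi
  let p : K[X] := ∑ j : Fin n, C (g j) * X ^ (j : ℕ)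
  have hp : p ≠ 0 := fun h => hgi <| by
    simpa [p, finsetSum_coeff, coeff_C_mul_X_pow, Fin.val_eq_val] using congrArg (coeff · i) h
  refine aeval_mulVec_ne_zero_of_disjoint_spectrum hvw hAB hx0 hx hp
    ((natDegree_lt_iff_degree_lt hp).mpr (degree_sum_fin_lt g)) ?_
  simpa [p, sum_mulVec, ← Algebra.smul_def, smul_mulVec] using hg

theorem exists_isUnit_mul_eq_mul_companion [IsAlgClosed K] (hAB : (A - B).rank ≤ 1)
    (hspec : Disjoint (spectrum K A) (spectrum K B)) :
    ∃ P, IsUnit P ∧ A * P = P * companion A.charpoly ∧ B * P = P * companion B.charpoly := by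
  rcases Nat.eq_zero_or_pos n with rfl | hn
  · exact ⟨1, isUnit_one, Subsingleton.elim _ _, Subsingleton.elim _ _⟩
  obtain ⟨v, w, hvw⟩ := exists_eq_vecMulVec_of_rank_le_one hAB
  obtain ⟨x, hx0, hx⟩ := exists_ne_zero_forall_dotProduct_pow_mulVec_eq_zero hn A w
  refine ⟨krylov A x, isUnit_krylov_of_disjoint_spectrum hvw hspec hx0 hx, mul_krylov A x, ?_⟩
  rw [← krylov_eq_of_sub_eq_vecMulVec hvw hx]
  exact mul_krylov B x

end Levelt

section Conj

variable {K n : Type*} [Field K] [Fintype n] [DecidableEq n] {P : Matrix n n K}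

theorem isUnit_conj (hP : IsUnit P) {M : Matrix n n K} (hM : IsUnit M) : IsUnit (P * M * P⁻¹) :=
  (hP.mul hM).mul (isUnit_nonsing_inv_iff.mpr hP)

theorem charpoly_conj (hP : IsUnit P) (M : Matrix n n K) : (P * M * P⁻¹).charpoly = M.charpoly := by
  obtain ⟨u, rfl⟩ := hP
  exact charpoly_units_conj u M

theorem spectrum_conj (hP : IsUnit P) (M : Matrix n n K) :
    spectrum K (P * M * P⁻¹) = spectrum K M := by
  obtain ⟨u, rfl⟩ := hP
  rw [← coe_units_inv, spectrum.units_conjugate]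

end Conj

end Matrix

open Matrix

theorem stmt_16_general (n : ℕ) (A B : Matrix (Fin n) (Fin n) ℂ)
    (hB : IsUnit B)
    (hpr : (A * B⁻¹ - 1).rank = 1)
    (hspec : spectrum ℂ A ∩ spectrum ℂ B = ∅) :
    ∀ A' B' : Matrix (Fin n) (Fin n) ℂ,
      (∃ P : Matrix (Fin n) (Fin n) ℂ, IsUnit P ∧ A' = P * A * P⁻¹) →
      (∃ Q : Matrix (Fin n) (Fin n) ℂ, IsUnit Q ∧ B' = Q * B * Q⁻¹) →
      (A' * B'⁻¹ - 1).rank = 1 →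
      ∃ U : Matrix (Fin n) (Fin n) ℂ, IsUnit U ∧ A' = U * A * U⁻¹ ∧ B' = U * B * U⁻¹ := by
  rintro A' B' ⟨P, hP, rfl⟩ ⟨Q, hQ, rfl⟩ hpr'
  have hdisj := Set.disjoint_iff_inter_eq_empty.mpr hspec
  obtain ⟨S, hS, hAS, hBS⟩ := exists_isUnit_mul_eq_mul_companion
    ((rank_sub_eq_rank_mul_inv_sub_one A hB).trans hpr).le hdisj
  obtain ⟨S', hS', hAS', hBS'⟩ := exists_isUnit_mul_eq_mul_companion
    ((rank_sub_eq_rank_mul_inv_sub_one _ (isUnit_conj hQ hB)).trans hpr').le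
    (by rwa [spectrum_conj hP, spectrum_conj hQ])
  rw [charpoly_conj hP] at hAS'
  rw [charpoly_conj hQ] at hBS'
  exact ⟨S' * S⁻¹, hS'.mul (isUnit_nonsing_inv_iff.mpr hS),
    eq_conj_of_mul_eq_mul_of_mul_eq_mul hS hS' hAS hAS',
    eq_conj_of_mul_eq_mul_of_mul_eq_mul hS hS' hBS hBS'⟩

theorem stmt_16 (n : ℕ) (hn : 2 ≤ n) (A B : Matrix (Fin n) (Fin n) ℂ)
    (hA : IsUnit A) (hB : IsUnit B)
    (hpr : (A * B⁻¹ - 1).rank = 1)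
    (hspec : spectrum ℂ A ∩ spectrum ℂ B = ∅) :
    ∀ A' B' : Matrix (Fin n) (Fin n) ℂ,
      (∃ P : Matrix (Fin n) (Fin n) ℂ, IsUnit P ∧ A' = P * A * P⁻¹) →
      (∃ Q : Matrix (Fin n) (Fin n) ℂ, IsUnit Q ∧ B' = Q * B * Q⁻¹) →
      (A' * B'⁻¹ - 1).rank = 1 →
      ∃ U : Matrix (Fin n) (Fin n) ℂ, IsUnit U ∧ A' = U * A * U⁻¹ ∧ B' = U * B * U⁻¹ :=
  stmt_16_general n A B hB hpr hspec
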